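/- Equivalence of OMD-forced halfspaces with regret matching⁺: fix η > 0 and define z⁰ = 0 and zᵗ = argmin_{z ∈ ℝⁿ≥0} ⟨−uᵗ, z⟩ + (1/(2η))‖z − zᵗ⁻¹‖₂² for payoff vectors u¹, u², … ∈ ℝⁿ. Then zᵗ = [zᵗ⁻¹ + ηuᵗ]⁺ for all t, and zᵗ = η wᵗ where w⁰ = 0 and wᵗ = [wᵗ⁻¹ + uᵗ]⁺ is the RM⁺ accumulator; consequently zᵗ/‖zᵗ‖₁ = wᵗ/‖wᵗ‖₁ whenever wᵗ ≠ 0, independently of η. -/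

import Mathlib

open scoped InnerProductSpace BigOperators

/-- Componentwise positive part `[w]⁺`. -/
noncomputable def posPart {n : ℕ} (w : EuclideanSpace ℝ (Fin n)) : EuclideanSpace ℝ (Fin n) :=
  WithLp.toLp 2 (fun i => max (w i) 0)

/-- ℓ₁ norm on ℝⁿ. -/
noncomputable def l1 {n : ℕ} (w : EuclideanSpace ℝ (Fin n)) : ℝ := ∑ i, |w i|

/-!
Completing the square turns the OMD objective `⟪-u, y⟫ + ‖y - a‖² / (2η)` into
`‖y - (a + η u)‖² / (2η)` plus a constant, so its minimiser over the orthant is the Euclidean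
projection of `a + η u`, which is the positive part. Since the positive part commutes with
multiplication by `η > 0`, induction gives `zᵗ = η wᵗ`, and the ℓ₁-normalisation cancels `η`.
-/

section InnerProductSpace

variable {F : Type*} [NormedAddCommGroup F] [InnerProductSpace ℝ F]

theorem inner_neg_add_norm_sub_sq_eq {η : ℝ} (hη : η ≠ 0) (u a y : F) :
    ⟪-u, y⟫_ℝ + 1 / (2 * η) * ‖y - a‖ ^ 2 =
      1 / (2 * η) * ‖y - (a + η • u)‖ ^ 2 + (⟪-u, a⟫_ℝ - η / 2 * ‖u‖ ^ 2) := by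
  rw [sub_add_eq_sub_sub, norm_sub_sq_real (y - a), real_inner_smul_right, norm_smul,
    Real.norm_eq_abs, mul_pow, sq_abs, inner_sub_left, real_inner_comm u y, real_inner_comm u a,
    inner_neg_left, inner_neg_left]
  field_simp
  ring

end InnerProductSpace

section Orthant

variable {n : ℕ}

@[simp]
theorem posPart_apply (w : EuclideanSpace ℝ (Fin n)) (i : Fin n) : posPart w i = max (w i) 0 :=
  rfl

theorem posPart_apply_nonneg (w : EuclideanSpace ℝ (Fin n)) (i : Fin n) : 0 ≤ posPart w i := by
  simp

theorem posPart_smul {c : ℝ} (hc : 0 ≤ c) (w : EuclideanSpace ℝ (Fin n)) :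
    posPart (c • w) = c • posPart w := by
  ext i
  simp [mul_max_of_nonneg _ _ hc]

theorem l1_smul (c : ℝ) (w : EuclideanSpace ℝ (Fin n)) : l1 (c • w) = |c| * l1 w := by
  simp [l1, abs_mul, Finset.mul_sum]

theorem l1_smul_normalize {c : ℝ} (hc : 0 < c) (w : EuclideanSpace ℝ (Fin n)) :
    (l1 (c • w))⁻¹ • (c • w) = (l1 w)⁻¹ • w := by
  rw [l1_smul, abs_of_pos hc, smul_smul, mul_inv, mul_right_comm, inv_mul_cancel₀ hc.ne', one_mul]

theorem sq_sub_max_zero_add_sq_le {y : ℝ} (hy : 0 ≤ y) (b : ℝ) :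
    (y - max b 0) ^ 2 + (max b 0 - b) ^ 2 ≤ (y - b) ^ 2 := by
  rcases le_total 0 b with hb | hb
  · simp [max_eq_left hb]
  · rw [max_eq_right hb]
    nlinarith [mul_nonneg hy (neg_nonneg.2 hb)]

theorem norm_sub_posPart_sq_add_le {y : EuclideanSpace ℝ (Fin n)} (hy : ∀ i, 0 ≤ y i)
    (b : EuclideanSpace ℝ (Fin n)) :
    ‖y - posPart b‖ ^ 2 + ‖posPart b - b‖ ^ 2 ≤ ‖y - b‖ ^ 2 := by
  simp only [EuclideanSpace.norm_sq_eq, Real.norm_eq_abs, sq_abs, PiLp.sub_apply, posPart_apply,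
    ← Finset.sum_add_distrib]
  exact Finset.sum_le_sum fun i _ => sq_sub_max_zero_add_sq_le (hy i) (b i)

theorem eq_posPart_of_norm_sub_sq_le {x b : EuclideanSpace ℝ (Fin n)} (hx : ∀ i, 0 ≤ x i)
    (hmin : ‖x - b‖ ^ 2 ≤ ‖posPart b - b‖ ^ 2) : x = posPart b := by
  have hpyth := norm_sub_posPart_sq_add_le hx b
  have hdist : ‖x - posPart b‖ ^ 2 ≤ 0 := by linarith
  rw [← sub_eq_zero, ← norm_eq_zero]
  exact pow_eq_zero_iff two_ne_zero |>.mp (le_antisymm hdist (sq_nonneg _))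

theorem eq_posPart_of_isMinOn {η : ℝ} (hη : 0 < η) {u a x : EuclideanSpace ℝ (Fin n)}
    (hx : ∀ i, 0 ≤ x i)
    (hmin : IsMinOn (fun y : EuclideanSpace ℝ (Fin n) => ⟪-u, y⟫_ℝ + 1 / (2 * η) * ‖y - a‖ ^ 2)
      {y | ∀ i, 0 ≤ y i} x) :
    x = posPart (a + η • u) := by
  refine eq_posPart_of_norm_sub_sq_le hx ?_
  have hle := isMinOn_iff.mp hmin _ (posPart_apply_nonneg (a + η • u))
  simp only [inner_neg_add_norm_sub_sq_eq hη.ne'] at hle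
  exact le_of_mul_le_mul_left (by linarith) (by positivity : (0 : ℝ) < 1 / (2 * η))

end Orthant

/-- OMD-forced halfspaces coincide with regret matching⁺. With `z⁰ = 0` and
`zᵗ = argmin_{z ∈ ℝⁿ≥0} ⟨−uᵗ, z⟩ + (1/(2η))‖z − zᵗ⁻¹‖₂²`, one has
`zᵗ = [zᵗ⁻¹ + ηuᵗ]⁺` and `zᵗ = η wᵗ`, where `w⁰ = 0, wᵗ = [wᵗ⁻¹ + uᵗ]⁺` is the RM⁺
accumulator; consequently `zᵗ/‖zᵗ‖₁ = wᵗ/‖wᵗ‖₁` whenever `wᵗ ≠ 0`, independently of `η`. -/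
theorem stmt_19 {n : ℕ} (η : ℝ) (hη : 0 < η)
    (u z w : ℕ → EuclideanSpace ℝ (Fin n))
    (hz0 : z 0 = 0)
    (hz : ∀ t : ℕ, 1 ≤ t → (∀ i, 0 ≤ z t i) ∧
      IsMinOn (fun y : EuclideanSpace ℝ (Fin n) =>
          ⟪-u t, y⟫_ℝ + 1 / (2 * η) * ‖y - z (t - 1)‖ ^ 2)
        {y | ∀ i, 0 ≤ y i} (z t))
    (hw0 : w 0 = 0)
    (hw : ∀ t : ℕ, 1 ≤ t → w t = posPart (w (t - 1) + u t)) :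
    (∀ t : ℕ, 1 ≤ t → z t = posPart (z (t - 1) + η • u t)) ∧
    (∀ t : ℕ, z t = η • w t) ∧
    (∀ t : ℕ, w t ≠ 0 → (l1 (z t))⁻¹ • z t = (l1 (w t))⁻¹ • w t) := by
  have hstep : ∀ t, 1 ≤ t → z t = posPart (z (t - 1) + η • u t) := fun t ht =>
    eq_posPart_of_isMinOn hη (hz t ht).1 (hz t ht).2
  have hscale : ∀ t, z t = η • w t := by
    intro t
    induction t with
    | zero => simp [hz0, hw0]
    | succ t ih =>
      rw [hstep (t + 1) t.succ_pos, hw (t + 1) t.succ_pos, Nat.add_sub_cancel, ih, ← smul_add,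
        posPart_smul hη.le]
  refine ⟨hstep, hscale, fun t _ => ?_⟩
  rw [hscale t, l1_smul_normalize hη]
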